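/- Let E be a BCK-algebra with greatest element 1 and an element e with 0 < e < 1, and let n > 1 satisfy 1\e^n = 0 and 1\e^{n-1} > 0. Define P_i = 1\e^i for i = 0,...,n-1 and Q_i = P_i\(P_{i+1}\(...\(P_{n-2}\P_{n-1})...)) (with Q_{n-1} = P_{n-1}). Then Q_i\Q_{i-1} = 0 for all i = 1,...,n-1. -/
import Mathlib


structure BCK (A : Type*) where
  zero : A
  sub : A → A → A
  ax1 : ∀ x y z, sub (sub (sub x y) (sub x z)) (sub z y) = zero
  ax2 : ∀ x, sub x zero = x
  ax3 : ∀ x, sub zero x = zero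
  ax4 : ∀ x y, sub x y = zero → sub y x = zero → x = y

def BCK.iterSub {A : Type*} (B : BCK A) (a b : A) : ℕ → A
  | 0 => a
  | n + 1 => B.sub (B.iterSub a b n) b

namespace BCK

variable {A : Type*} (B : BCK A)

lemma sub_self (x : A) : B.sub x x = B.zero := by
  have h := B.ax1 x B.zero B.zero
  simpa [B.ax2, B.ax3] using h

lemma bck2 (x y : A) : B.sub (B.sub x (B.sub x y)) y = B.zero := by
  have h := B.ax1 x B.zero y
  simpa [B.ax2] using h

lemma le_trans' {x y z : A} (h1 : B.sub x y = B.zero) (h2 : B.sub y z = B.zero) :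
    B.sub x z = B.zero := by
  have h := B.ax1 x z y
  simpa [h1, h2, B.ax2] using h

lemma mono_left {x y : A} (z : A) (h : B.sub x y = B.zero) :
    B.sub (B.sub x z) (B.sub y z) = B.zero := by
  have h' := B.ax1 x z y
  simpa [h, B.ax2] using h'

lemma anti_right {y z : A} (x : A) (h : B.sub y z = B.zero) :
    B.sub (B.sub x z) (B.sub x y) = B.zero := by
  have h' := B.ax1 x z y
  simpa [h, B.ax2] using h'

lemma comm (x y z : A) : B.sub (B.sub x y) z = B.sub (B.sub x z) y := by
  have key : ∀ u v : A, B.sub (B.sub (B.sub x u) v) (B.sub (B.sub x v) u) = B.zero := by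
    intro u v
    have h1 : B.sub (B.sub (B.sub x u) v) (B.sub (B.sub x u) (B.sub x (B.sub x v))) = B.zero :=
      B.anti_right _ (B.bck2 x v)
    have h2 : B.sub (B.sub (B.sub x u) (B.sub x (B.sub x v))) (B.sub (B.sub x v) u) = B.zero :=
      B.ax1 x u (B.sub x v)
    exact B.le_trans' h1 h2
  exact B.ax4 _ _ (key y z) (key z y)

lemma triple (x y : A) : B.sub x (B.sub x (B.sub x y)) = B.sub x y := by
  refine B.ax4 _ _ (B.bck2 x (B.sub x y)) ?_
  exact B.anti_right x (B.bck2 x y)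

lemma le_zero {x : A} (h : B.sub x B.zero = B.zero) : x = B.zero := by
  rwa [B.ax2] at h

end BCK

theorem bck_Q_descending {A : Type*} (B : BCK A) (one e : A)
    (htop : ∀ x : A, B.sub x one = B.zero)
    (he0 : e ≠ B.zero) (he1 : e ≠ one)
    (n : ℕ) (hn : 1 < n)
    (hzero : B.iterSub one e n = B.zero)
    (hnonzero : B.iterSub one e (n - 1) ≠ B.zero)
    (P Q : ℕ → A)
    (hP : ∀ i, P i = B.iterSub one e i)
    (hQtop : Q (n - 1) = P (n - 1))
    (hQ : ∀ i, i < n - 1 → Q i = B.sub (P i) (Q (i + 1))) :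
    ∀ i : ℕ, 1 ≤ i → i ≤ n - 1 → B.sub (Q i) (Q (i - 1)) = B.zero := by
  have hPsucc : ∀ j, P (j + 1) = B.sub (P j) e := by
    intro j; rw [hP, hP]; rfl
  have key : ∀ d : ℕ, ∀ i : ℕ, 1 ≤ i → i ≤ n - 1 → n - 1 - i = d →
      B.sub (Q i) (Q (i - 1)) = B.zero := by
    intro d
    induction d using Nat.strong_induction_on with
    | _ d IH =>
      intro i hi1 hi2 hd
      -- Q (i-1) = P (i-1) \ Q i
      have hQim : Q (i - 1) = B.sub (P (i - 1)) (Q i) := by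
        have h := hQ (i - 1) (by omega)
        rwa [Nat.sub_add_cancel hi1] at h
      have hPi : P i = B.sub (P (i - 1)) e := by
        have := hPsucc (i - 1)
        rwa [Nat.sub_add_cancel hi1] at this
      set a := P (i - 1) with ha
      rcases eq_or_lt_of_le hi2 with htopi | hlt
      · -- i = n - 1 : Q i = P (n-1) = a \ e, and P (n-1) \ e = P n = 0
        have hQi : Q i = B.sub a e := by rw [htopi, hQtop, ← htopi, hPi]
        have hue : B.sub (B.sub a e) e = B.zero := by
          rw [← hPi, hP, htopi]
          have h := hzero
          rw [show n = (n - 1) + 1 by omega] at h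
          simpa [BCK.iterSub] using h
        rw [hQim, hQi]
        exact B.anti_right a hue
      · -- i < n - 1
        have hQi : Q i = B.sub (P i) (Q (i + 1)) := hQ i hlt
        -- S_i = ((a\e)\Q_{i+1}) \ (a\Q_i) = ((a\e)\(a\Q_i)) \ Q_{i+1}
        have step1 : B.sub (Q i) (Q (i - 1)) =
            B.sub (B.sub (B.sub a e) (B.sub a (Q i))) (Q (i + 1)) := by
          rw [hQim, hQi, hPi, B.comm]
        have h1 : B.sub (B.sub (B.sub a e) (B.sub a (Q i))) (B.sub (Q i) e) = B.zero :=
          B.ax1 a e (Q i)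
        have h2 : B.sub (B.sub (B.sub (B.sub a e) (B.sub a (Q i))) (Q (i + 1)))
            (B.sub (B.sub (Q i) e) (Q (i + 1))) = B.zero := B.mono_left _ h1
        have hQie : B.sub (Q i) e = B.sub (P (i + 1)) (Q (i + 1)) := by
          rw [hQi, hPi, B.comm, ← hPi, ← hPsucc]
        have h3 : B.sub (B.sub (Q i) (Q (i - 1)))
            (B.sub (B.sub (P (i + 1)) (Q (i + 1))) (Q (i + 1))) = B.zero := by
          rw [step1, ← hQie]; exact h2
        -- now bound the right-hand term
        rcases eq_or_lt_of_le (Nat.succ_le_of_lt hlt) with htop1 | hlt1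
        · -- i + 1 = n - 1
          have : B.sub (P (i + 1)) (Q (i + 1)) = B.zero := by
            rw [show i + 1 = n - 1 from htop1, hQtop]; exact B.sub_self _
          rw [this, B.ax3] at h3
          exact B.le_zero h3
        · -- i + 1 < n - 1
          have hQi1 : Q (i + 1) = B.sub (P (i + 1)) (Q (i + 2)) := hQ (i + 1) hlt1
          have h4 : B.sub (B.sub (P (i + 1)) (Q (i + 1))) (Q (i + 2)) = B.zero := by
            rw [hQi1]; exact B.bck2 _ _
          have h5 : B.sub (B.sub (B.sub (P (i + 1)) (Q (i + 1))) (Q (i + 1)))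
              (B.sub (Q (i + 2)) (Q (i + 1))) = B.zero := B.mono_left _ h4
          have h6 : B.sub (Q (i + 2)) (Q (i + 2 - 1)) = B.zero :=
            IH (d - 2) (by omega) (i + 2) (by omega) (by omega) (by omega)
          simp only [show i + 2 - 1 = i + 1 by omega] at h6
          rw [h6] at h5
          have h7 := B.le_trans' h3 h5
          exact B.le_zero h7
  intro i hi1 hi2
  exact key (n - 1 - i) i hi1 hi2 rfl
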